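/- Let V be a 2n-dimensional real vector space with inner product g and a linear map J: V → V satisfying J² = −id and g(JX,JY) = g(X,Y) for all X,Y; set σ = g(J·,·). Suppose A₁, A₂ ∈ End(V) satisfy σ(AᵢX,Y) + σ(X,AᵢY) = 0 for all X,Y ∈ V and i = 1,2, that A₁A₂ = A₂A₁, and that A₁ + JA₁J + JA₂ − A₂J = 0. Then A₁ and A₂ each commute with J and are skew-symmetric with respect to g (i.e. A₁, A₂ ∈ 𝔲(V,g,J)). -/

import Mathlib

/-!
Put `t = JA₁ - A₁J`, `p = A₁ - JA₁J` and `r = A₂ - JA₂J`. The relation says exactly that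
`A₂ + JA₂J = t`, so splitting `[A₁, A₂] = 0` into its parts commuting and anticommuting with `J`
gives `[p, r] = 2Jt²` and `[r, t] = J[p, t]`. From these, `[p, t]² + 2t⁴` is a sum of
commutators, so `tr([p, t]²) + 2 tr(t⁴) = 0`. Symplecticity makes `t` self-adjoint and `p`
skew-adjoint for `g`, so `[p, t]` is self-adjoint and both traces are nonnegative; hence `t⁴ = 0`
and `t = 0`. Then `A₁` and `A₂` commute with `J`, and a symplectic map commuting with `J` is
`g`-skew.
-/

section Ring
variable {R : Type*} [Ring R] {J : R}

theorem mul_mul_of_mul_self_eq_neg_one (hJ : J * J = -1) (x : R) : J * (J * x) = -x := by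
  rw [← mul_assoc, hJ, neg_one_mul]

theorem commute_sub_mul_mul_self (hJ : J * J = -1) (A : R) : Commute (A - J * A * J) J := by
  have hJJ := mul_mul_of_mul_self_eq_neg_one hJ
  rw [Commute, SemiconjBy]; noncomm_ring [hJ, hJJ]

theorem mul_sub_mul_mul_self (hJ : J * J = -1) (A : R) :
    (J * A - A * J) * J = -(J * (J * A - A * J)) := by
  have hJJ := mul_mul_of_mul_self_eq_neg_one hJ
  noncomm_ring [hJ, hJJ]

theorem add_mul_mul_self_eq_neg_mul (hJ : J * J = -1) (A : R) :
    A + J * A * J = -(J * (J * A - A * J)) := by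
  have hJJ := mul_mul_of_mul_self_eq_neg_one hJ
  noncomm_ring [hJ, hJJ]

theorem commute_of_add_mul_mul_self_eq_zero (hJ : J * J = -1) {A : R} (h : A + J * A * J = 0) :
    Commute J A := by
  have hJJ := mul_mul_of_mul_self_eq_neg_one hJ
  rw [add_mul_mul_self_eq_neg_mul hJ, neg_eq_zero] at h
  rw [Commute, SemiconjBy, ← sub_eq_zero, ← neg_neg (J * A - A * J), ← hJJ (J * A - A * J), h,
    mul_zero, neg_zero]

theorem lie_sq_add_two_mul_pow_four {p r t : R} (hJ : J * J = -1) (hrJ : Commute r J)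
    (htJ : t * J = -(J * t)) (hpr : ⁅p, r⁆ = 2 * (J * t ^ 2)) (hrt : ⁅r, t⁆ = J * ⁅p, t⁆) :
    ⁅p, t⁆ ^ 2 + 2 * t ^ 4 = ⁅p * ⁅p, t⁆, t⁆ + ⁅r, p * (J * t ^ 2)⁆ := by
  set k := ⁅p, t⁆
  set m := J * t ^ 2
  have hJt : Commute J (t ^ 2) := by
    have hJt' : J * t = -(t * J) := by rw [htJ, neg_neg]
    calc J * t ^ 2 = -(t * J * t) := by rw [htJ]; noncomm_ring
      _ = t ^ 2 * J := by rw [mul_assoc, hJt']; noncomm_ring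
  have hrm : ⁅r, m⁆ = ⁅t, k⁆ := by
    calc ⁅r, m⁆ = J * (⁅r, t⁆ * t + t * ⁅r, t⁆) := by
          simp only [m, Ring.lie_def, sq]; rw [← mul_assoc r J, hrJ.eq]; noncomm_ring
      _ = J * J * (k * t) + J * (t * J) * k := by rw [hrt]; noncomm_ring
      _ = J * J * (k * t - t * k) := by rw [htJ]; noncomm_ring
      _ = ⁅t, k⁆ := by rw [hJ, Ring.lie_def]; noncomm_ring
  have hmm : m * m = -t ^ 4 := by
    calc m * m = J * J * (t ^ 2 * t ^ 2) := by
          simp only [m]; rw [mul_assoc J, ← mul_assoc (t ^ 2), ← hJt.eq]; noncomm_ring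
      _ = -t ^ 4 := by rw [hJ]; noncomm_ring
  calc k ^ 2 + 2 * t ^ 4 = p * ⁅t, k⁆ + ⁅p * k, t⁆ + 2 * t ^ 4 := by
        simp only [k, Ring.lie_def]; noncomm_ring
    _ = ⁅p, r⁆ * m + ⁅r, p * m⁆ + ⁅p * k, t⁆ + 2 * t ^ 4 := by
        rw [← hrm]; simp only [Ring.lie_def]; noncomm_ring
    _ = ⁅p * k, t⁆ + ⁅r, p * m⁆ := by
        rw [hpr, mul_assoc, hmm]; noncomm_ring

theorem Commute.conj_of_mul_self_eq_neg_one (hJ : J * J = -1) {a b : R}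
    (h : Commute a b) : Commute (J * a * J) (J * b * J) := by
  have hconj : ∀ x y : R, J * x * J * (J * y * J) = -(J * (x * y) * J) := by
    intro x y
    calc J * x * J * (J * y * J) = J * x * (J * J) * y * J := by noncomm_ring
      _ = -(J * (x * y) * J) := by rw [hJ]; noncomm_ring
  rw [Commute, SemiconjBy, hconj, hconj, h.eq]

variable {A₁ A₂ : R}

theorem add_mul_mul_self_eq_of_rel (hJ : J * J = -1)
    (hrel : A₁ + J * A₁ * J + J * A₂ - A₂ * J = 0) :
    A₂ + J * A₂ * J = J * A₁ - A₁ * J := by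
  have hJJ := mul_mul_of_mul_self_eq_neg_one hJ
  rw [← sub_eq_zero]
  calc A₂ + J * A₂ * J - (J * A₁ - A₁ * J) = -(J * (A₁ + J * A₁ * J + J * A₂ - A₂ * J)) := by
        noncomm_ring [hJ, hJJ]
    _ = 0 := by rw [hrel, mul_zero, neg_zero]

theorem lie_sub_mul_mul_self_eq (hJ : J * J = -1) (hA : Commute A₁ A₂)
    (hrel : A₁ + J * A₁ * J + J * A₂ - A₂ * J = 0) :
    ⁅A₁ - J * A₁ * J, A₂ - J * A₂ * J⁆ = 2 * (J * (J * A₁ - A₁ * J) ^ 2) := by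
  have hJJ := mul_mul_of_mul_self_eq_neg_one hJ
  have hsum : ⁅A₁ - J * A₁ * J, A₂ - J * A₂ * J⁆ + ⁅A₁ + J * A₁ * J, A₂ + J * A₂ * J⁆
      = 2 * (⁅A₁, A₂⁆ + ⁅J * A₁ * J, J * A₂ * J⁆) := by
    simp only [Ring.lie_def]; noncomm_ring
  rw [hA.lie_eq, (hA.conj_of_mul_self_eq_neg_one hJ).lie_eq, add_zero, mul_zero,
    add_eq_zero_iff_eq_neg, add_mul_mul_self_eq_of_rel hJ hrel,
    add_mul_mul_self_eq_neg_mul hJ] at hsum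
  rw [hsum, Ring.lie_def]
  noncomm_ring [hJ, hJJ]

theorem lie_sub_mul_mul_self_eq_mul_lie (hJ : J * J = -1) (hA : Commute A₁ A₂)
    (hrel : A₁ + J * A₁ * J + J * A₂ - A₂ * J = 0) :
    ⁅A₂ - J * A₂ * J, J * A₁ - A₁ * J⁆ = J * ⁅A₁ - J * A₁ * J, J * A₁ - A₁ * J⁆ := by
  have hJJ := mul_mul_of_mul_self_eq_neg_one hJ
  have hsum : ⁅A₁ - J * A₁ * J, A₂ + J * A₂ * J⁆ + ⁅A₁ + J * A₁ * J, A₂ - J * A₂ * J⁆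
      = 2 * (⁅A₁, A₂⁆ - ⁅J * A₁ * J, J * A₂ * J⁆) := by
    simp only [Ring.lie_def]; noncomm_ring
  rw [hA.lie_eq, (hA.conj_of_mul_self_eq_neg_one hJ).lie_eq, sub_zero, mul_zero,
    add_eq_zero_iff_eq_neg, add_mul_mul_self_eq_of_rel hJ hrel,
    add_mul_mul_self_eq_neg_mul hJ] at hsum
  rw [hsum]
  simp only [Ring.lie_def]
  noncomm_ring [hJ, hJJ]

end Ring

section StarRing
variable {R : Type*} [Ring R] [StarRing R] {J A : R}

theorem star_eq_mul_mul_self (hJ : J * J = -1) (hJs : star J = -J) (hA : IsSelfAdjoint (J * A)) :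
    star A = J * A * J := by
  have h := hA.star_eq
  rw [star_mul, hJs, mul_neg] at h
  calc star A = -(star A * J) * J := by rw [neg_mul, mul_assoc, hJ]; noncomm_ring
    _ = J * A * J := by rw [h]

theorem isSelfAdjoint_mul_sub_mul (hJ : J * J = -1) (hJs : star J = -J)
    (hA : IsSelfAdjoint (J * A)) : IsSelfAdjoint (J * A - A * J) := by
  have hJJ := mul_mul_of_mul_self_eq_neg_one hJ
  rw [IsSelfAdjoint, star_sub, star_mul, star_mul, hJs, star_eq_mul_mul_self hJ hJs hA]
  noncomm_ring [hJ, hJJ]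

theorem star_sub_mul_mul_self (hJ : J * J = -1) (hJs : star J = -J) (hA : IsSelfAdjoint (J * A)) :
    star (A - J * A * J) = -(A - J * A * J) := by
  have hJJ := mul_mul_of_mul_self_eq_neg_one hJ
  rw [star_sub, star_mul, star_mul, hJs, star_eq_mul_mul_self hJ hJs hA]
  noncomm_ring [hJ, hJJ]

theorem star_eq_neg_of_commute (hJ : J * J = -1) (hJs : star J = -J) (hA : IsSelfAdjoint (J * A))
    (hc : Commute J A) : star A = -A := by
  rw [star_eq_mul_mul_self hJ hJs hA, mul_assoc, ← hc.eq, mul_mul_of_mul_self_eq_neg_one hJ]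

theorem IsSelfAdjoint.lie_of_star_eq_neg {p t : R} (ht : IsSelfAdjoint t) (hp : star p = -p) :
    IsSelfAdjoint ⁅p, t⁆ := by
  rw [IsSelfAdjoint, Ring.lie_def, star_sub, star_mul, star_mul, hp, ht.star_eq]
  noncomm_ring

end StarRing

section RealInnerProductSpace
open LinearMap
open scoped InnerProductSpace

variable {E : Type*} [NormedAddCommGroup E] [InnerProductSpace ℝ E] [FiniteDimensional ℝ E]

theorem IsSelfAdjoint.trace_mul_self_eq_sum_norm_sq {ι : Type*} [Fintype ι] {T : E →ₗ[ℝ] E}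
    (hT : IsSelfAdjoint T) (b : OrthonormalBasis ι ℝ E) :
    trace ℝ E (T * T) = ∑ i, ‖T (b i)‖ ^ 2 := by
  rw [trace_eq_sum_inner _ b]
  refine Fintype.sum_congr _ _ fun i => ?_
  rw [Module.End.mul_apply, ← (isSymmetric_iff_isSelfAdjoint T).mpr hT, real_inner_self_eq_norm_sq]

theorem IsSelfAdjoint.trace_mul_self_nonneg {T : E →ₗ[ℝ] E} (hT : IsSelfAdjoint T) :
    0 ≤ trace ℝ E (T * T) := by
  rw [hT.trace_mul_self_eq_sum_norm_sq (stdOrthonormalBasis ℝ E)]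
  positivity

theorem IsSelfAdjoint.eq_zero_of_trace_mul_self_eq_zero {T : E →ₗ[ℝ] E} (hT : IsSelfAdjoint T)
    (h : trace ℝ E (T * T) = 0) : T = 0 := by
  let b := stdOrthonormalBasis ℝ E
  rw [hT.trace_mul_self_eq_sum_norm_sq b, Finset.sum_eq_zero_iff_of_nonneg fun i _ => by positivity] at h
  refine b.toBasis.ext fun i => ?_
  simpa using h i (Finset.mem_univ i)

theorem IsSelfAdjoint.eq_zero_of_trace_pow_four_eq_zero {T : E →ₗ[ℝ] E} (hT : IsSelfAdjoint T)
    (h : trace ℝ E (T ^ 4) = 0) : T = 0 := by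
  have hT2 : T ^ 2 = 0 := (hT.pow 2).eq_zero_of_trace_mul_self_eq_zero (by rwa [← pow_add])
  exact hT.eq_zero_of_trace_mul_self_eq_zero (by rw [← sq, hT2, map_zero])

theorem commute_of_isSelfAdjoint_mul {J A₁ A₂ : E →ₗ[ℝ] E} (hJ : J * J = -1) (hJs : star J = -J)
    (hA₁ : IsSelfAdjoint (J * A₁)) (hA : Commute A₁ A₂)
    (hrel : A₁ + J * A₁ * J + J * A₂ - A₂ * J = 0) : Commute J A₁ ∧ Commute J A₂ := by
  have hid := lie_sq_add_two_mul_pow_four hJ (commute_sub_mul_mul_self hJ A₂)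
    (mul_sub_mul_mul_self hJ A₁) (lie_sub_mul_mul_self_eq hJ hA hrel)
    (lie_sub_mul_mul_self_eq_mul_lie hJ hA hrel)
  have ht := isSelfAdjoint_mul_sub_mul hJ hJs hA₁
  have hk := ht.lie_of_star_eq_neg (star_sub_mul_mul_self hJ hJs hA₁)
  have htrace := congrArg (trace ℝ E) hid
  rw [map_add, map_add, trace_lie, trace_lie, add_zero, two_mul, map_add, sq] at htrace
  have ht4 : trace ℝ E ((J * A₁ - A₁ * J) ^ 4) = 0 := by
    have := (ht.pow 2).trace_mul_self_nonneg
    rw [← pow_add] at this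
    linarith [hk.trace_mul_self_nonneg]
  have ht0 := ht.eq_zero_of_trace_pow_four_eq_zero ht4
  refine ⟨sub_eq_zero.mp ht0, commute_of_add_mul_mul_self_eq_zero hJ ?_⟩
  rw [add_mul_mul_self_eq_of_rel hJ hrel, ht0]

end RealInnerProductSpace

section InnerProductSpace
open LinearMap
open scoped InnerProductSpace

variable {𝕜 E : Type*} [RCLike 𝕜] [NormedAddCommGroup E] [InnerProductSpace 𝕜 E]
  [FiniteDimensional 𝕜 E] {J A : E →ₗ[𝕜] E}

theorem star_eq_neg_iff_inner : star A = -A ↔ ∀ x y, ⟪A x, y⟫_𝕜 + ⟪x, A y⟫_𝕜 = 0 := by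
  rw [star_eq_adjoint, eq_comm, eq_adjoint_iff]
  simp only [LinearMap.neg_apply, inner_neg_left, neg_eq_iff_add_eq_zero]

theorem star_eq_neg_of_inner_map_map (hJ : ∀ x, J (J x) = -x)
    (hcomp : ∀ x y, ⟪J x, J y⟫_𝕜 = ⟪x, y⟫_𝕜) : star J = -J :=
  star_eq_neg_iff_inner.mpr fun x y => by rw [← hcomp x (J y), hJ, inner_neg_right, add_neg_cancel]

theorem isSelfAdjoint_mul_of_inner (hJs : star J = -J)
    (hA : ∀ x y, ⟪J (A x), y⟫_𝕜 + ⟪J x, A y⟫_𝕜 = 0) : IsSelfAdjoint (J * A) := by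
  have hJ x y : ⟪J x, y⟫_𝕜 = -⟪x, J y⟫_𝕜 :=
    eq_neg_of_add_eq_zero_left (star_eq_neg_iff_inner.mp hJs x y)
  refine (isSymmetric_iff_isSelfAdjoint _).mp fun x y => ?_
  rw [Module.End.mul_apply, Module.End.mul_apply, eq_neg_of_add_eq_zero_left (hA x y), hJ, neg_neg]

end InnerProductSpace

abbrev innerProductSpaceCoreOfPosDef {V : Type*} [AddCommGroup V] [Module ℝ V]
    (g : V →ₗ[ℝ] V →ₗ[ℝ] ℝ) (hsymm : ∀ x y : V, g x y = g y x)
    (hpos : ∀ x : V, x ≠ 0 → 0 < g x x) : InnerProductSpace.Core ℝ V where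
  inner x y := g x y
  conj_inner_symm x y := hsymm y x
  re_inner_nonneg x := by
    rcases eq_or_ne x 0 with rfl | hx
    · simp
    · exact (hpos x hx).le
  add_left x y z := by simp
  smul_left x y c := by simp
  definite x h := by
    by_contra hx
    exact (hpos x hx).ne' h

theorem symplectic_endos_are_unitary_general
    {V : Type*} [AddCommGroup V] [Module ℝ V] [FiniteDimensional ℝ V]
    (g : V →ₗ[ℝ] V →ₗ[ℝ] ℝ)
    (hsymm : ∀ x y : V, g x y = g y x) (hpos : ∀ x : V, x ≠ 0 → 0 < g x x)
    (J : V →ₗ[ℝ] V) (hJ : ∀ x : V, J (J x) = -x)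
    (hcomp : ∀ x y : V, g (J x) (J y) = g x y)
    (A₁ A₂ : V →ₗ[ℝ] V)
    (hsp₁ : ∀ x y : V, g (J (A₁ x)) y + g (J x) (A₁ y) = 0)
    (hsp₂ : ∀ x y : V, g (J (A₂ x)) y + g (J x) (A₂ y) = 0)
    (hcommAA : ∀ x : V, A₁ (A₂ x) = A₂ (A₁ x))
    (hrel : ∀ x : V, A₁ x + J (A₁ (J x)) + J (A₂ x) - A₂ (J x) = 0) :
    (∀ x : V, A₁ (J x) = J (A₁ x)) ∧ (∀ x y : V, g (A₁ x) y + g x (A₁ y) = 0) ∧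
    (∀ x : V, A₂ (J x) = J (A₂ x)) ∧ (∀ x y : V, g (A₂ x) y + g x (A₂ y) = 0) := by
  let _ : NormedAddCommGroup V := (innerProductSpaceCoreOfPosDef g hsymm hpos).toNormedAddCommGroup
  let _ : InnerProductSpace ℝ V := .ofCore (innerProductSpaceCoreOfPosDef g hsymm hpos).toCore
  have hJJ : J * J = -1 := LinearMap.ext hJ
  have hJs : star J = -J := star_eq_neg_of_inner_map_map hJ hcomp
  have hA₁ := isSelfAdjoint_mul_of_inner hJs hsp₁
  have hA₂ := isSelfAdjoint_mul_of_inner hJs hsp₂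
  obtain ⟨hc₁, hc₂⟩ :=
    commute_of_isSelfAdjoint_mul hJJ hJs hA₁ (LinearMap.ext hcommAA) (LinearMap.ext hrel)
  exact ⟨fun x => (LinearMap.congr_fun hc₁ x).symm,
    star_eq_neg_iff_inner.mp (star_eq_neg_of_commute hJJ hJs hA₁ hc₁),
    fun x => (LinearMap.congr_fun hc₂ x).symm,
    star_eq_neg_iff_inner.mp (star_eq_neg_of_commute hJJ hJs hA₂ hc₂)⟩

/-- commuting symplectic endomorphisms satisfying the compatibility relation
`A₁ + JA₁J + JA₂ − A₂J = 0` are unitary, i.e. commute with `J` and are `g`-skew. -/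
theorem symplectic_endos_are_unitary
    {V : Type*} [AddCommGroup V] [Module ℝ V] [FiniteDimensional ℝ V]
    (n : ℕ) (hn : Module.finrank ℝ V = 2 * n)
    (g : V →ₗ[ℝ] V →ₗ[ℝ] ℝ)
    (hsymm : ∀ x y : V, g x y = g y x) (hpos : ∀ x : V, x ≠ 0 → 0 < g x x)
    (J : V →ₗ[ℝ] V) (hJ : ∀ x : V, J (J x) = -x)
    (hcomp : ∀ x y : V, g (J x) (J y) = g x y)
    (A₁ A₂ : V →ₗ[ℝ] V)
    (hsp₁ : ∀ x y : V, g (J (A₁ x)) y + g (J x) (A₁ y) = 0)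
    (hsp₂ : ∀ x y : V, g (J (A₂ x)) y + g (J x) (A₂ y) = 0)
    (hcommAA : ∀ x : V, A₁ (A₂ x) = A₂ (A₁ x))
    (hrel : ∀ x : V, A₁ x + J (A₁ (J x)) + J (A₂ x) - A₂ (J x) = 0) :
    (∀ x : V, A₁ (J x) = J (A₁ x)) ∧ (∀ x y : V, g (A₁ x) y + g x (A₁ y) = 0) ∧
    (∀ x : V, A₂ (J x) = J (A₂ x)) ∧ (∀ x y : V, g (A₂ x) y + g x (A₂ y) = 0) :=
  symplectic_endos_are_unitary_general g hsymm hpos J hJ hcomp A₁ A₂ hsp₁ hsp₂ hcommAA hrel
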